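/- For any two distinct strings x, y over Σ and any letters λ, μ ∈ Σ with λ ≤ μ: if x ≺ y in V-order, then λx ≺ μy (where λx and μy denote the strings obtained by prepending λ to x and μ to y respectively). -/

import Mathlib

variable {α : Type*} [LinearOrder α]

/-- The star operation on strings: delete the letter `x_h`, where `h` is the
start of the longest non-decreasing suffix (so `h = 1` iff the whole string is
non-decreasing, and otherwise `x_{h-1} > x_h ≤ x_{h+1} ≤ ⋯ ≤ x_n`). -/
def vstar : List α → List α
  | [] => []
  | a :: t => if List.IsChain (· ≤ ·) (a :: t) then t else a :: vstar t

/-- V-order `≺` between distinct strings `x`, `y`: either `x` lies on the path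
`y, y*, y^{2*}, …, ε`, or (if neither lies on the path of the other) taking the
least `s, t` with `x^{(s+1)*} = y^{(t+1)*}` and the greatest position `j` at
which `s = x^{s*}` and `t = y^{t*}` differ, the letter of `x^{s*}` at `j` is
smaller than that of `y^{t*}`. -/
def VLess (x y : List α) : Prop :=
  (∃ k : ℕ, 0 < k ∧ vstar^[k] y = x) ∨
  ((¬ ∃ k : ℕ, vstar^[k] y = x) ∧ (¬ ∃ k : ℕ, vstar^[k] x = y) ∧
    ∃ s t : ℕ,
      vstar^[s + 1] x = vstar^[t + 1] y ∧
      (∀ s' t' : ℕ, vstar^[s' + 1] x = vstar^[t' + 1] y → s ≤ s' ∧ t ≤ t') ∧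
      ∃ j : ℕ, j < (vstar^[s] x).length ∧
        (∀ j' : ℕ, j < j' → (vstar^[s] x)[j']? = (vstar^[t] y)[j']?) ∧
        ∃ a b : α, (vstar^[s] x)[j]? = some a ∧ (vstar^[t] y)[j]? = some b ∧
          a < b)

/-!
Write `w_i` for `vstar^[i] w`. As `|w_i| = |w| - i`, two paths can only meet along one
diagonal, so for distinct `x`, `y` the V-order is decided by the least pair `(a, b)` with
`x_a = y_b`: `x ≺ y` iff `a = 0`, or `a = s + 1`, `b = t + 1` and the strings `x_s`, `y_t`, which
have the same star, compare at their deleted positions (`LocalLt`): the one deleting further to the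
right is smaller, and at equal positions the deleted letters decide.

The path of `λx` is `λx_0, …, λx_K, x_K, x_{K+1}, …` with `K = headLife λ x`, and that of `μy`
likewise with `L = headLife μ y`. If the first meet of `λx` and `μy` comes before both thresholds,
then `λ = μ` and it is the first meet of `x`, `y`; if it comes after both, it is the first meet of
`x`, `y` shifted by one. Past `L` every `(μy)_T` is sorted with letters `≥ μ`, so its deleted
position is `0` and only a sorted `(λx)_S` needs its head compared. The remaining cases rest on
one consequence of `x ≺ y`: a sorted `x_i = c :: y_L` has `c < μ`; in particular the path of `x`
never passes through `μ :: y_j` for `j ≤ L`.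
-/

open List Function

theorem vstar_cons_of_isChain {a : α} {w : List α} (h : IsChain (· ≤ ·) (a :: w)) :
    vstar (a :: w) = w := by
  simp [vstar, h]

theorem vstar_cons_of_not_isChain {a : α} {w : List α} (h : ¬IsChain (· ≤ ·) (a :: w)) :
    vstar (a :: w) = a :: vstar w := by
  simp [vstar, h]

theorem vstar_of_isChain {l : List α} (h : IsChain (· ≤ ·) l) : vstar l = l.tail := by
  cases l with
  | nil => rfl
  | cons a w => exact vstar_cons_of_isChain h

theorem eq_cons_vstar_of_isChain {l : List α} (h : IsChain (· ≤ ·) l) (hl : l ≠ []) :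
    ∃ c, l = c :: vstar l := by
  obtain ⟨c, w, rfl⟩ := exists_cons_of_ne_nil hl
  exact ⟨c, by rw [vstar_cons_of_isChain h]⟩

theorem lt_of_not_isChain_cons_cons {a b : α} {w : List α} (h : ¬IsChain (· ≤ ·) (a :: b :: w))
    (hw : IsChain (· ≤ ·) (b :: w)) : b < a :=
  lt_of_not_ge fun hab => h (isChain_cons_cons.2 ⟨hab, hw⟩)

def vstarIdx : List α → ℕ
  | [] => 0
  | a :: w => if IsChain (· ≤ ·) (a :: w) then 0 else vstarIdx w + 1

theorem vstarIdx_cons_of_not_isChain {a : α} {w : List α} (h : ¬IsChain (· ≤ ·) (a :: w)) :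
    vstarIdx (a :: w) = vstarIdx w + 1 := by
  simp [vstarIdx, h]

theorem vstarIdx_eq_zero_iff {l : List α} : vstarIdx l = 0 ↔ IsChain (· ≤ ·) l := by
  cases l with
  | nil => simp [vstarIdx]
  | cons a w => by_cases h : IsChain (· ≤ ·) (a :: w) <;> simp [vstarIdx, h]

theorem vstar_eq_eraseIdx (l : List α) : vstar l = l.eraseIdx (vstarIdx l) := by
  induction l with
  | nil => rfl
  | cons a w ih => by_cases h : IsChain (· ≤ ·) (a :: w) <;> simp [vstar, vstarIdx, h, ih]

theorem vstarIdx_lt_length {l : List α} (hl : l ≠ []) : vstarIdx l < l.length := by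
  induction l with
  | nil => exact absurd rfl hl
  | cons a w ih =>
    by_cases h : IsChain (· ≤ ·) (a :: w)
    · simp [vstarIdx, h]
    · have hw : w ≠ [] := by rintro rfl; exact h (isChain_singleton a)
      simpa [vstarIdx_cons_of_not_isChain h] using ih hw

theorem exists_getElem?_vstarIdx_lt {l : List α} (h : 0 < vstarIdx l) :
    ∃ a b, l[vstarIdx l - 1]? = some a ∧ l[vstarIdx l]? = some b ∧ b < a := by
  induction l with
  | nil => simp [vstarIdx] at h
  | cons a w ih =>
    have hc : ¬IsChain (· ≤ ·) (a :: w) := fun hc => by simp [vstarIdx, hc] at h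
    rw [vstarIdx_cons_of_not_isChain hc]
    rcases Nat.eq_zero_or_pos (vstarIdx w) with hw | hw
    · have hwc : IsChain (· ≤ ·) w := vstarIdx_eq_zero_iff.1 hw
      obtain ⟨b, w', rfl⟩ := exists_cons_of_ne_nil (show w ≠ [] by
        rintro rfl; exact hc (isChain_singleton a))
      exact ⟨a, b, by simp [hw], by simp [hw], lt_of_not_isChain_cons_cons hc hwc⟩
    · obtain ⟨u, v, hu, hv, hvu⟩ := ih hw
      refine ⟨u, v, ?_, by simpa using hv, hvu⟩
      rw [show vstarIdx w + 1 - 1 = vstarIdx w - 1 + 1 by omega, getElem?_cons_succ]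
      exact hu

theorem length_vstar (l : List α) : (vstar l).length = l.length - 1 := by
  rcases eq_or_ne l [] with rfl | hl
  · rfl
  · rw [vstar_eq_eraseIdx, length_eraseIdx_of_lt (vstarIdx_lt_length hl)]

theorem length_iterate_vstar (k : ℕ) (l : List α) : (vstar^[k] l).length = l.length - k := by
  induction k generalizing l with
  | zero => rfl
  | succ k ih => rw [iterate_succ_apply, ih, length_vstar]; omega

theorem iterate_vstar_eq_nil {l : List α} {k : ℕ} (h : l.length ≤ k) : vstar^[k] l = [] :=
  eq_nil_of_length_eq_zero (by rw [length_iterate_vstar]; omega)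

theorem iterate_vstar_ne_nil {l : List α} {k : ℕ} (h : k < l.length) : vstar^[k] l ≠ [] :=
  ne_nil_of_length_pos (by rw [length_iterate_vstar]; omega)

theorem iterate_vstar_of_isChain {l : List α} (h : IsChain (· ≤ ·) l) (r : ℕ) :
    vstar^[r] l = l.drop r := by
  induction r generalizing l with
  | zero => rfl
  | succ r ih => rw [iterate_succ_apply, vstar_of_isChain h, ih h.tail, drop_tail]

def IsFirstMeet (x y : List α) (a b : ℕ) : Prop :=
  vstar^[a] x = vstar^[b] y ∧ ∀ a' b', vstar^[a'] x = vstar^[b'] y → a ≤ a' ∧ b ≤ b'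

theorem iterate_vstar_add_eq {x y : List α} {a b : ℕ} (h : vstar^[a] x = vstar^[b] y) (r : ℕ) :
    vstar^[a + r] x = vstar^[b + r] y := by
  rw [add_comm a, add_comm b, iterate_add_apply, iterate_add_apply, h]

theorem exists_isFirstMeet (x y : List α) : ∃ a b, IsFirstMeet x y a b := by
  classical
  have hex : ∃ a b, vstar^[a] x = vstar^[b] y :=
    ⟨x.length, y.length, by rw [iterate_vstar_eq_nil le_rfl, iterate_vstar_eq_nil le_rfl]⟩
  let a := Nat.find hex
  have hexb : ∃ b, vstar^[a] x = vstar^[b] y := Nat.find_spec hex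
  let b := Nat.find hexb
  have hab : vstar^[a] x = vstar^[b] y := Nat.find_spec hexb
  refine ⟨a, b, hab, fun a' b' h => ⟨Nat.find_min' hex ⟨b', h⟩, ?_⟩⟩
  by_contra! hb
  have ha : a ≤ a' := Nat.find_min' hex ⟨b', h⟩
  have hlen := congrArg length hab
  have hlen' := congrArg length h
  simp only [length_iterate_vstar] at hlen hlen'
  -- Both meets have the same length: if it is `0` then `(a, b')` is a meet too, otherwise `b = b'`.
  rcases Nat.eq_zero_or_pos (x.length - a) with h0 | hpos
  · have hnil : vstar^[a] x = vstar^[b'] y := by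
      rw [iterate_vstar_eq_nil (by omega), iterate_vstar_eq_nil (by omega)]
    exact absurd (Nat.find_min' hexb hnil) (not_le.2 hb)
  · omega

theorem IsFirstMeet.le_length {x y : List α} {a b : ℕ} (h : IsFirstMeet x y a b) :
    a ≤ x.length ∧ b ≤ y.length :=
  h.2 _ _ (by rw [iterate_vstar_eq_nil le_rfl, iterate_vstar_eq_nil le_rfl])

theorem IsFirstMeet.length_sub_eq {x y : List α} {a b : ℕ} (h : IsFirstMeet x y a b) :
    x.length - a = y.length - b := by
  simpa only [length_iterate_vstar] using congrArg length h.1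

theorem IsFirstMeet.iterate_ne {x y : List α} {s t : ℕ} (h : IsFirstMeet x y (s + 1) (t + 1)) :
    vstar^[s] x ≠ vstar^[t] y :=
  fun he => absurd (h.2 s t he).1 (by omega)

theorem isFirstMeet_of_ne {x y : List α} {p q : ℕ} (hp : p < x.length) (hq : q < y.length)
    (hne : vstar^[p] x ≠ vstar^[q] y) (he : vstar^[p + 1] x = vstar^[q + 1] y) :
    IsFirstMeet x y (p + 1) (q + 1) := by
  refine ⟨he, fun a' b' h => ?_⟩
  have hlen := congrArg length he
  have hlen' := congrArg length h
  simp only [length_iterate_vstar] at hlen hlen'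
  by_contra! hlt
  have hshift : a' + (p - a') = p ∧ b' + (p - a') = q := by omega
  apply hne
  rw [← hshift.1, ← hshift.2]
  exact iterate_vstar_add_eq h _

def LastDiffLt (u v : List α) : Prop :=
  ∃ j, j < u.length ∧ (∀ j', j < j' → u[j']? = v[j']?) ∧
    ∃ a b, u[j]? = some a ∧ v[j]? = some b ∧ a < b

def LocalLt (u v : List α) : Prop :=
  vstarIdx v < vstarIdx u ∨
    vstarIdx u = vstarIdx v ∧ ∃ a b, u[vstarIdx u]? = some a ∧ v[vstarIdx v]? = some b ∧ a < b

theorem LastDiffLt.not_lastDiffLt {u v : List α} (h : LastDiffLt u v) : ¬LastDiffLt v u := by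
  rintro ⟨j', -, hj', a', b', ha', hb', hab'⟩
  obtain ⟨j, -, hj, a, b, ha, hb, hab⟩ := h
  rcases lt_trichotomy j j' with hlt | rfl | hlt
  · have := hj j' hlt
    rw [ha', hb'] at this
    exact hab'.ne' (Option.some.inj this)
  · obtain rfl : a = b' := Option.some.inj (ha.symm.trans hb')
    obtain rfl : b = a' := Option.some.inj (hb.symm.trans ha')
    exact lt_asymm hab hab'
  · have := hj' j hlt
    rw [ha, hb] at this
    exact hab.ne' (Option.some.inj this)

section SameStar

variable {u v : List α} (hstar : vstar u = vstar v)
include hstar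

theorem getElem?_eq_of_vstar_eq {j : ℕ} (hu : j < vstarIdx u) (hv : j < vstarIdx v) :
    u[j]? = v[j]? := by
  rw [← getElem?_eraseIdx_of_lt (l := u) hu, ← getElem?_eraseIdx_of_lt (l := v) hv,
    ← vstar_eq_eraseIdx u, ← vstar_eq_eraseIdx v, hstar]

theorem getElem?_succ_eq_of_vstar_eq {j : ℕ} (hu : vstarIdx u ≤ j) (hv : vstarIdx v ≤ j) :
    u[j + 1]? = v[j + 1]? := by
  rw [← getElem?_eraseIdx_of_ge (l := u) hu, ← getElem?_eraseIdx_of_ge (l := v) hv,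
    ← vstar_eq_eraseIdx u, ← vstar_eq_eraseIdx v, hstar]

variable (hlen : u.length = v.length) (hne : u ≠ v)
include hlen hne

theorem lastDiffLt_of_localLt (h : LocalLt u v) : LastDiffLt u v := by
  have hu : u ≠ [] := by rintro rfl; exact hne (eq_nil_of_length_eq_zero hlen.symm).symm
  have hidx : vstarIdx v ≤ vstarIdx u := by rcases h with h | ⟨h, -⟩ <;> omega
  refine ⟨vstarIdx u, vstarIdx_lt_length hu, fun j' hj' => ?_, ?_⟩
  · obtain ⟨j, rfl⟩ := Nat.exists_eq_add_of_lt hj'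
    exact getElem?_succ_eq_of_vstar_eq hstar (by omega) (by omega)
  rcases h with h | ⟨heq, hab⟩
  · -- `v` carries, at position `vstarIdx u`, the letter of `u` just before it, which is larger.
    obtain ⟨a, b, ha, hb, hba⟩ := exists_getElem?_vstarIdx_lt (by omega : 0 < vstarIdx u)
    refine ⟨b, a, hb, ?_, hba⟩
    obtain ⟨k, hk⟩ : ∃ k, vstarIdx u = k + 1 := ⟨_, (Nat.succ_pred_eq_of_pos (by omega)).symm⟩
    rw [← ha, hk, Nat.add_sub_cancel,
      ← getElem?_eraseIdx_of_ge (l := v) (i := vstarIdx v) (j := k) (by omega),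
      ← getElem?_eraseIdx_of_lt (l := u) (i := vstarIdx u) (j := k) (by omega),
      ← vstar_eq_eraseIdx u, ← vstar_eq_eraseIdx v, hstar]
  · rwa [heq] at hab ⊢

theorem localLt_or_localLt : LocalLt u v ∨ LocalLt v u := by
  rcases lt_trichotomy (vstarIdx u) (vstarIdx v) with h | h | h
  · exact Or.inr (Or.inl h)
  · have hu : u ≠ [] := by rintro rfl; exact hne (eq_nil_of_length_eq_zero hlen.symm).symm
    have hlt := vstarIdx_lt_length hu
    have hab : u[vstarIdx u] ≠ v[vstarIdx v]'(by omega) := by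
      intro hab
      refine hne (ext_getElem? fun j => ?_)
      rcases lt_trichotomy j (vstarIdx u) with hj | rfl | hj
      · exact getElem?_eq_of_vstar_eq hstar hj (by omega)
      · rw [getElem?_eq_getElem hlt, getElem?_eq_getElem (by omega)]
        simpa [h] using hab
      · obtain ⟨j, rfl⟩ := Nat.exists_eq_add_of_lt hj
        exact getElem?_succ_eq_of_vstar_eq hstar (by omega) (by omega)
    rcases lt_or_gt_of_ne hab with hab | hab
    · exact Or.inl (Or.inr ⟨h, _, _, getElem?_eq_getElem _, getElem?_eq_getElem _, hab⟩)
    · exact Or.inr (Or.inr ⟨h.symm, _, _, getElem?_eq_getElem _, getElem?_eq_getElem _, hab⟩)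
  · exact Or.inl (Or.inl h)

theorem lastDiffLt_iff_localLt : LastDiffLt u v ↔ LocalLt u v :=
  ⟨fun h => (localLt_or_localLt hstar hlen hne).resolve_right fun h' =>
      h.not_lastDiffLt (lastDiffLt_of_localLt hstar.symm hlen.symm hne.symm h'),
    lastDiffLt_of_localLt hstar hlen hne⟩

end SameStar

theorem LocalLt.vstarIdx_eq_zero {u v : List α} (h : LocalLt u v) (hu : vstarIdx u = 0) :
    vstarIdx v = 0 := by
  rcases h with h | ⟨h, -⟩ <;> omega

theorem localLt_of_not_isChain_of_isChain {u v : List α} (hu : ¬IsChain (· ≤ ·) u)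
    (hv : IsChain (· ≤ ·) v) : LocalLt u v :=
  Or.inl <| by
    rw [vstarIdx_eq_zero_iff.2 hv]
    exact Nat.pos_of_ne_zero (mt vstarIdx_eq_zero_iff.1 hu)

theorem localLt_cons_cons_iff {a b : α} {w : List α} (ha : IsChain (· ≤ ·) (a :: w))
    (hb : IsChain (· ≤ ·) (b :: w)) : LocalLt (a :: w) (b :: w) ↔ a < b := by
  simp [LocalLt, vstarIdx_eq_zero_iff.2 ha, vstarIdx_eq_zero_iff.2 hb]

theorem LocalLt.cons {a : α} {u v : List α} (h : LocalLt u v) (hu : ¬IsChain (· ≤ ·) (a :: u))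
    (hv : ¬IsChain (· ≤ ·) (a :: v)) : LocalLt (a :: u) (a :: v) := by
  simpa [LocalLt, vstarIdx_cons_of_not_isChain hu, vstarIdx_cons_of_not_isChain hv] using h

theorem IsFirstMeet.lastDiffLt_iff_localLt {x y : List α} {s t : ℕ}
    (h : IsFirstMeet x y (s + 1) (t + 1)) :
    LastDiffLt (vstar^[s] x) (vstar^[t] y) ↔ LocalLt (vstar^[s] x) (vstar^[t] y) := by
  have hstar : vstar (vstar^[s] x) = vstar (vstar^[t] y) := by
    simpa only [iterate_succ_apply'] using h.1
  have hlen : (vstar^[s] x).length = (vstar^[t] y).length := by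
    have := h.length_sub_eq
    have := h.le_length
    simp only [length_iterate_vstar]
    omega
  exact _root_.lastDiffLt_iff_localLt hstar hlen h.iterate_ne

theorem vless_iff_of_isFirstMeet {x y : List α} {a b : ℕ} (hxy : x ≠ y)
    (h : IsFirstMeet x y a b) :
    VLess x y ↔ a = 0 ∨ ∃ s t, a = s + 1 ∧ b = t + 1 ∧ LocalLt (vstar^[s] x) (vstar^[t] y) := by
  constructor
  · rintro (⟨k, -, hk⟩ | ⟨hyx, hxy', s, t, hst, hmin, hlt⟩)
    · exact Or.inl (Nat.le_zero.1 (h.2 0 k hk.symm).1)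
    · have ha : a ≠ 0 := by rintro rfl; exact hyx ⟨b, h.1.symm⟩
      have hb : b ≠ 0 := by rintro rfl; exact hxy' ⟨a, h.1⟩
      have hle := h.2 _ _ hst
      have hge := hmin (a - 1) (b - 1) (by
        rw [Nat.sub_add_cancel (by omega), Nat.sub_add_cancel (by omega)]; exact h.1)
      obtain ⟨rfl, rfl⟩ : a = s + 1 ∧ b = t + 1 := by omega
      exact Or.inr ⟨s, t, rfl, rfl, h.lastDiffLt_iff_localLt.1 hlt⟩
  · rintro (rfl | ⟨s, t, rfl, rfl, hlt⟩)
    · refine Or.inl ⟨b, Nat.pos_of_ne_zero ?_, h.1.symm⟩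
      rintro rfl
      exact hxy h.1
    · refine Or.inr ⟨fun ⟨k, hk⟩ => absurd (h.2 0 k hk.symm).1 (by omega),
        fun ⟨k, hk⟩ => absurd (h.2 k 0 hk).2 (by omega), s, t, h.1, fun s' t' h' => ?_,
        h.lastDiffLt_iff_localLt.2 hlt⟩
      have := h.2 _ _ h'
      omega

theorem VLess.pos_of_isFirstMeet {x y : List α} {a b : ℕ} (h : VLess x y) (hxy : x ≠ y)
    (hab : IsFirstMeet x y a b) : 0 < b := by
  rcases (vless_iff_of_isFirstMeet hxy hab).1 h with rfl | ⟨s, t, -, rfl, -⟩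
  · exact Nat.pos_of_ne_zero fun hb => hxy (by simpa [hb] using hab.1)
  · exact t.succ_pos

theorem exists_isChain_cons_iterate_vstar (c : α) (w : List α) :
    ∃ i, IsChain (· ≤ ·) (c :: vstar^[i] w) :=
  ⟨w.length, by rw [iterate_vstar_eq_nil le_rfl]; exact isChain_singleton c⟩

/-- The number of steps for which the head `c` survives on the path of `c :: w`. -/
noncomputable def headLife (c : α) (w : List α) : ℕ :=
  Nat.find (exists_isChain_cons_iterate_vstar c w)

section HeadLife

variable {c : α} {w : List α}

theorem isChain_cons_iterate_headLife (c : α) (w : List α) :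
    IsChain (· ≤ ·) (c :: vstar^[headLife c w] w) :=
  Nat.find_spec (exists_isChain_cons_iterate_vstar c w)

theorem not_isChain_cons_iterate_of_lt_headLife {i : ℕ} (h : i < headLife c w) :
    ¬IsChain (· ≤ ·) (c :: vstar^[i] w) :=
  Nat.find_min (exists_isChain_cons_iterate_vstar c w) h

theorem headLife_le_length : headLife c w ≤ w.length :=
  Nat.find_min' _ (by rw [iterate_vstar_eq_nil le_rfl]; exact isChain_singleton c)

theorem iterate_vstar_cons_of_le_headLife {m : ℕ} (h : m ≤ headLife c w) :
    vstar^[m] (c :: w) = c :: vstar^[m] w := by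
  induction m with
  | zero => rfl
  | succ m ih =>
    rw [iterate_succ_apply', ih (by omega), iterate_succ_apply',
      vstar_cons_of_not_isChain (not_isChain_cons_iterate_of_lt_headLife h)]

theorem iterate_vstar_cons_succ_of_headLife_le {m : ℕ} (h : headLife c w ≤ m) :
    vstar^[m + 1] (c :: w) = vstar^[m] w := by
  obtain ⟨r, rfl⟩ := Nat.exists_eq_add_of_le h
  rw [show headLife c w + r + 1 = r + (headLife c w + 1) by omega, iterate_add_apply,
    iterate_succ_apply', iterate_vstar_cons_of_le_headLife le_rfl,
    vstar_cons_of_isChain (isChain_cons_iterate_headLife c w), ← iterate_add_apply, add_comm]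

theorem isChain_iterate_vstar_cons_of_headLife_le {m : ℕ} (h : headLife c w ≤ m) :
    IsChain (· ≤ ·) (vstar^[m] (c :: w)) ∧ ∀ d ∈ vstar^[m] (c :: w), c ≤ d := by
  have hK := isChain_cons_iterate_headLife c w
  have hdrop : vstar^[m] (c :: w) = (c :: vstar^[headLife c w] w).drop (m - headLife c w) := by
    rw [← iterate_vstar_of_isChain hK, ← iterate_vstar_cons_of_le_headLife le_rfl, ← iterate_add_apply,
      Nat.sub_add_cancel h]
  rw [hdrop]
  refine ⟨hK.drop _, fun d hd => ?_⟩
  rcases mem_cons.1 (mem_of_mem_drop hd) with rfl | hd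
  · exact le_rfl
  · exact rel_of_pairwise_cons (isChain_iff_pairwise.1 hK) hd

end HeadLife

section VLess

variable {x y : List α} (h : VLess x y) (hxy : x ≠ y)
include h hxy

theorem VLess.lt_of_iterate_eq_cons {mu c : α} {i : ℕ} (hc : IsChain (· ≤ ·) (vstar^[i] x))
    (he : vstar^[i] x = c :: vstar^[headLife mu y] y) : c < mu := by
  have hnext : vstar^[i + 1] x = vstar^[headLife mu y] y := by
    rw [iterate_succ_apply', he, vstar_cons_of_isChain (he ▸ hc)]
  obtain ⟨a, b, hab⟩ := exists_isFirstMeet x y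
  have hb := h.pos_of_isFirstMeet hxy hab
  have hKy : headLife mu y ≤ y.length := headLife_le_length
  obtain ⟨t, ht⟩ : ∃ t, headLife mu y = t + 1 :=
    Nat.exists_eq_succ_of_ne_zero (by have := (hab.2 _ _ hnext).2; omega)
  have hy : ∀ c', IsChain (· ≤ ·) (c' :: vstar^[t + 1] y) →
      vstar^[t] y = c' :: vstar^[t + 1] y → c' < mu := fun c' hch he' =>
    lt_of_not_isChain_cons_cons (he' ▸ not_isChain_cons_iterate_of_lt_headLife (by omega)) hch
  have hyt : IsChain (· ≤ ·) (vstar^[t] y) → ∃ c', vstar^[t] y = c' :: vstar^[t + 1] y := by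
    intro hch
    obtain ⟨c', hc'⟩ := eq_cons_vstar_of_isChain hch (iterate_vstar_ne_nil (by omega))
    exact ⟨c', by rwa [← iterate_succ_apply' vstar t y] at hc'⟩
  rw [ht] at he hnext
  by_cases hxt : vstar^[i] x = vstar^[t] y
  · obtain ⟨c', hc'⟩ := hyt (hxt ▸ hc)
    obtain rfl : c = c' := (cons.inj (he.symm.trans (hxt.trans hc'))).1
    exact hy c (he ▸ hc) (hxt ▸ he)
  · -- Otherwise the paths first meet at `(i + 1, t + 1)`, and the V-order compares `x_i` with `y_t`.
    have hi : i < x.length := by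
      by_contra! hi
      rw [iterate_vstar_eq_nil hi] at he
      exact cons_ne_nil _ _ he.symm
    have hm := isFirstMeet_of_ne hi (by omega) hxt hnext
    obtain ⟨s, t', hs, ht', hlt⟩ := ((vless_iff_of_isFirstMeet hxy hm).1 h).resolve_left (by omega)
    obtain ⟨rfl, rfl⟩ : i = s ∧ t = t' := by omega
    have hch : IsChain (· ≤ ·) (vstar^[t] y) :=
      vstarIdx_eq_zero_iff.1 (hlt.vstarIdx_eq_zero (vstarIdx_eq_zero_iff.2 hc))
    obtain ⟨c', hc'⟩ := hyt hch
    rw [he, hc'] at hlt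
    exact ((localLt_cons_cons_iff (he ▸ hc) (hc' ▸ hch)).1 hlt).trans (hy c' (hc' ▸ hch) hc')

theorem VLess.iterate_ne_cons_iterate {mu : α} {i j : ℕ} (hj : j ≤ headLife mu y) :
    vstar^[i] x ≠ mu :: vstar^[j] y := by
  intro he
  rw [← iterate_vstar_cons_of_le_headLife hj] at he
  have hK := iterate_vstar_add_eq he (headLife mu y - j)
  rw [Nat.add_sub_cancel' hj, iterate_vstar_cons_of_le_headLife le_rfl] at hK
  exact lt_irrefl mu (h.lt_of_iterate_eq_cons hxy (hK ▸ isChain_cons_iterate_headLife mu y) hK)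

end VLess

section Cons

variable {x y : List α} {lam mu : α} (h : VLess x y) (hxy : x ≠ y)
include h hxy

theorem VLess.iterate_vstar_cons_ne (m : ℕ) : vstar^[m] (lam :: x) ≠ mu :: y := by
  intro he
  rcases le_or_gt m (headLife lam x) with hm | hm
  · rw [iterate_vstar_cons_of_le_headLife hm] at he
    obtain ⟨a, b, hab⟩ := exists_isFirstMeet x y
    have := (hab.2 m 0 (cons.inj he).2).2
    have := h.pos_of_isFirstMeet hxy hab
    omega
  · obtain ⟨m, rfl⟩ := Nat.exists_eq_add_of_lt hm
    rw [iterate_vstar_cons_succ_of_headLife_le (by omega)] at he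
    exact h.iterate_ne_cons_iterate hxy (Nat.zero_le _) he

theorem VLess.localLt_cons_of_lt_headLife {S T : ℕ}
    (hST : IsFirstMeet (lam :: x) (mu :: y) (S + 1) (T + 1))
    (hS : S < headLife lam x) (hT : T < headLife mu y) :
    LocalLt (vstar^[S] (lam :: x)) (vstar^[T] (mu :: y)) := by
  have hmeet := hST.1
  rw [iterate_vstar_cons_of_le_headLife hS, iterate_vstar_cons_of_le_headLife hT] at hmeet
  obtain ⟨rfl, hmeet'⟩ := cons_eq_cons.1 hmeet
  have hne := hST.iterate_ne
  rw [iterate_vstar_cons_of_le_headLife hS.le, iterate_vstar_cons_of_le_headLife hT.le] at hne ⊢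
  have hm := isFirstMeet_of_ne (hS.trans_le headLife_le_length) (hT.trans_le headLife_le_length)
    (fun he => hne (by rw [he])) hmeet'
  obtain ⟨s, t, hs, ht, hlt⟩ := ((vless_iff_of_isFirstMeet hxy hm).1 h).resolve_left (by omega)
  obtain ⟨rfl, rfl⟩ : S = s ∧ T = t := by omega
  exact hlt.cons (not_isChain_cons_iterate_of_lt_headLife hS)
    (not_isChain_cons_iterate_of_lt_headLife hT)

theorem VLess.localLt_cons_of_headLife_le {S T : ℕ}
    (hST : IsFirstMeet (lam :: x) (mu :: y) (S + 1 + 1) (T + 1 + 1))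
    (hS : headLife lam x ≤ S) (hT : headLife mu y ≤ T) :
    LocalLt (vstar^[S + 1] (lam :: x)) (vstar^[T + 1] (mu :: y)) := by
  have hmeet := hST.1
  rw [iterate_vstar_cons_succ_of_headLife_le (by omega : headLife lam x ≤ S + 1),
    iterate_vstar_cons_succ_of_headLife_le (by omega : headLife mu y ≤ T + 1)] at hmeet
  have hne := hST.iterate_ne
  rw [iterate_vstar_cons_succ_of_headLife_le hS, iterate_vstar_cons_succ_of_headLife_le hT] at hne ⊢
  have hle := hST.le_length
  simp only [length_cons] at hle
  have hm := isFirstMeet_of_ne (by omega) (by omega) hne hmeet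
  obtain ⟨s, t, hs, ht, hlt⟩ := ((vless_iff_of_isFirstMeet hxy hm).1 h).resolve_left (by omega)
  obtain ⟨rfl, rfl⟩ : S = s ∧ T = t := by omega
  exact hlt

theorem VLess.localLt_cons_of_isChain (hlm : lam ≤ mu) {S T : ℕ}
    (hST : IsFirstMeet (lam :: x) (mu :: y) (S + 1) (T + 1)) (hT : headLife mu y ≤ T)
    (hST' : S ≤ headLife lam x ∨ T = headLife mu y)
    (hXch : IsChain (· ≤ ·) (vstar^[S] (lam :: x))) :
    LocalLt (vstar^[S] (lam :: x)) (vstar^[T] (mu :: y)) := by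
  obtain ⟨hYch, hYge⟩ := isChain_iterate_vstar_cons_of_headLife_le hT
  have hW : vstar (vstar^[S] (lam :: x)) = vstar (vstar^[T] (mu :: y)) := by
    simpa only [iterate_succ_apply'] using hST.1
  have hle := hST.le_length
  obtain ⟨a, ha⟩ := eq_cons_vstar_of_isChain hXch (iterate_vstar_ne_nil (by omega))
  obtain ⟨c, hc⟩ := eq_cons_vstar_of_isChain hYch (iterate_vstar_ne_nil (by omega))
  rw [hW] at ha
  set W := vstar (vstar^[T] (mu :: y))
  rw [ha, hc, localLt_cons_cons_iff (ha ▸ hXch) (hc ▸ hYch)]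
  rcases le_or_gt S (headLife lam x) with hS | hS
  · -- The head `a = lam` is at most `mu ≤ c`, and `a ≠ c` as the first meet is at `(S + 1, T + 1)`.
    rw [iterate_vstar_cons_of_le_headLife hS] at ha
    obtain ⟨rfl, -⟩ := cons_eq_cons.1 ha
    refine lt_of_le_of_ne (hlm.trans (hYge c (hc ▸ mem_cons_self))) fun hac => hST.iterate_ne ?_
    rw [iterate_vstar_cons_of_le_headLife hS, ha, hc, hac]
  · obtain ⟨S, rfl⟩ := Nat.exists_eq_add_of_lt hS
    obtain rfl : T = headLife mu y := hST'.resolve_left (by omega)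
    rw [iterate_vstar_cons_of_le_headLife le_rfl] at hc
    obtain ⟨rfl, hyW⟩ := cons_eq_cons.1 hc
    rw [iterate_vstar_cons_succ_of_headLife_le (by omega), ← hyW] at ha
    rw [iterate_vstar_cons_succ_of_headLife_le (by omega)] at hXch
    exact h.lt_of_iterate_eq_cons hxy hXch ha

theorem VLess.localLt_cons (hlm : lam ≤ mu) {S T : ℕ}
    (hST : IsFirstMeet (lam :: x) (mu :: y) (S + 1) (T + 1)) :
    LocalLt (vstar^[S] (lam :: x)) (vstar^[T] (mu :: y)) := by
  rcases lt_or_ge T (headLife mu y) with hT | hT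
  · rcases lt_or_ge S (headLife lam x) with hS | hS
    · exact h.localLt_cons_of_lt_headLife hxy hST hS hT
    · have hmeet := hST.1
      rw [iterate_vstar_cons_succ_of_headLife_le hS, iterate_vstar_cons_of_le_headLife hT] at hmeet
      exact absurd hmeet (h.iterate_ne_cons_iterate hxy hT)
  by_cases hST' : S ≤ headLife lam x ∨ T = headLife mu y
  · by_cases hXch : IsChain (· ≤ ·) (vstar^[S] (lam :: x))
    · exact h.localLt_cons_of_isChain hxy hlm hST hT hST' hXch
    · exact localLt_of_not_isChain_of_isChain hXch
        (isChain_iterate_vstar_cons_of_headLife_le hT).1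
  · obtain ⟨S, rfl⟩ : ∃ S', S = S' + 1 := Nat.exists_eq_succ_of_ne_zero (by omega)
    obtain ⟨T, rfl⟩ : ∃ T', T = T' + 1 := Nat.exists_eq_succ_of_ne_zero (by omega)
    exact h.localLt_cons_of_headLife_le hxy hST (by omega) (by omega)

end Cons

/-- For distinct strings `x`, `y` and letters `λ ≤ μ`:
if `x ≺ y` in V-order then `λx ≺ μy`. -/
theorem vless_cons_mono {α : Type*} [LinearOrder α]
    (x y : List α) (lam mu : α) (hxy : x ≠ y) (hlm : lam ≤ mu) :
    VLess x y → VLess (lam :: x) (mu :: y) := by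
  intro h
  have hXY : lam :: x ≠ mu :: y := fun he => hxy (cons.inj he).2
  obtain ⟨A, B, hAB⟩ := exists_isFirstMeet (lam :: x) (mu :: y)
  rw [vless_iff_of_isFirstMeet hXY hAB]
  rcases A with _ | S
  · exact Or.inl rfl
  rcases B with _ | T
  · exact absurd hAB.1 (h.iterate_vstar_cons_ne hxy _)
  exact Or.inr ⟨S, T, rfl, rfl, h.localLt_cons hxy hlm hAB⟩
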